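/- Let m > 0 be squarefree, p an odd prime with p ∣ m, and suppose there exists π in the ring of integers D of ℚ(√m) with |N(π)| = p. Let a, b ∈ ℤ with p ∣ a, p ∤ b, and set ξ = (a + b√m)/p. Then there exist γ, δ ∈ D with |N(ξγ − δ)| = 1/p, and in particular 0 < |N(ξγ − δ)| < 1. -/

import Mathlib

/-!
Let `π` have norm `±p`. Because `p ∣ m`, the discriminant `Tr(π)² - 4 N(π) = m y²`
(with `y` an integer, `m` being squarefree) is divisible by `p`, so `p ∣ Tr(π)`, and then
`π² = Tr(π) π - N(π) ∈ p D`. Consequently `w = √m π / p` is integral, since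
`w² = (m / p) (π² / p)`. Writing `a = p a₀` and `u p + v b (m / p) = 1`, the elements
`γ = v w` and `δ = a₀ v w - u π` satisfy `ξ γ - δ = π / p`, of norm `N(π) / p² = ±1 / p`.
-/

section QuadraticCoordinates

variable {K : Type*} [Field K] [CharZero K] {d : ℚ} {s : K}

theorem exists_rat_add_mul_eq_of_adjoin_eq_top (hs : s ^ 2 = d)
    (hgen : Algebra.adjoin ℚ {s} = ⊤) (z : K) : ∃ x y : ℚ, (x : K) + y * s = z := by
  have hz : z ∈ Algebra.adjoin ℚ {s} := hgen ▸ Algebra.mem_top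
  induction hz using Algebra.adjoin_induction with
  | mem u hu => exact ⟨0, 1, by simp [Set.mem_singleton_iff.mp hu]⟩
  | algebraMap r => exact ⟨r, 0, by simp⟩
  | add u v _ _ hu hv =>
    obtain ⟨x₁, y₁, rfl⟩ := hu
    obtain ⟨x₂, y₂, rfl⟩ := hv
    exact ⟨x₁ + x₂, y₁ + y₂, by push_cast; ring⟩
  | mul u v _ _ hu hv =>
    obtain ⟨x₁, y₁, rfl⟩ := hu
    obtain ⟨x₂, y₂, rfl⟩ := hv
    refine ⟨x₁ * x₂ + d * y₁ * y₂, x₁ * y₂ + y₁ * x₂, ?_⟩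
    push_cast
    linear_combination (-y₁ * y₂ : K) * hs

theorem linearIndependent_one_of_forall_ratCast_ne (hirr : ∀ q : ℚ, (q : K) ≠ s) :
    LinearIndependent ℚ ![1, s] := by
  refine LinearIndependent.pair_iff.mpr fun x y hxy ↦ ?_
  rw [Rat.smul_def, Rat.smul_def, mul_one] at hxy
  obtain rfl | hy := eq_or_ne y 0
  · simpa using hxy
  · have hyK : (y : K) ≠ 0 := by exact_mod_cast hy
    refine absurd ?_ (hirr (-x / y))
    push_cast
    field_simp
    linear_combination -hxy

variable (hs : s ^ 2 = d) (hgen : Algebra.adjoin ℚ {s} = ⊤) (hirr : ∀ q : ℚ, (q : K) ≠ s)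
include hs hgen hirr

noncomputable def sqrtBasis : Module.Basis (Fin 2) ℚ K :=
  .mk (linearIndependent_one_of_forall_ratCast_ne hirr) fun z _ ↦ by
    obtain ⟨x, y, rfl⟩ := exists_rat_add_mul_eq_of_adjoin_eq_top hs hgen z
    rw [Matrix.range_cons_cons_empty, Submodule.mem_span_pair]
    exact ⟨x, y, by simp [Rat.smul_def]⟩

@[simp]
theorem coe_sqrtBasis : ⇑(sqrtBasis hs hgen hirr) = ![1, s] := Module.Basis.coe_mk _ _

@[simp]
theorem sqrtBasis_repr (x y : ℚ) :
    (sqrtBasis hs hgen hirr).repr ((x : K) + y * s) = Finsupp.equivFunOnFinite.symm ![x, y] := by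
  set b := sqrtBasis hs hgen hirr
  have hxy : (x : K) + y * s = x • b 0 + y • b 1 := by
    simp [b, Rat.smul_def]
  ext i
  fin_cases i <;> simp [hxy]

theorem leftMulMatrix_sqrtBasis (x y : ℚ) :
    Algebra.leftMulMatrix (sqrtBasis hs hgen hirr) ((x : K) + y * s) = !![x, d * y; y, x] := by
  have hmul : ((x : K) + y * s) * s = ((d * y : ℚ) : K) + x * s := by
    push_cast; linear_combination (y : K) * hs
  ext i j
  fin_cases i <;> fin_cases j <;>
    simp [Algebra.leftMulMatrix_eq_repr_mul, -Rat.cast_mul, hmul]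

theorem finrank_eq_two : Module.finrank ℚ K = 2 := by
  rw [Module.finrank_eq_card_basis (sqrtBasis hs hgen hirr), Fintype.card_fin]

theorem norm_ratCast_add_mul (x y : ℚ) :
    Algebra.norm ℚ ((x : K) + y * s) = x ^ 2 - d * y ^ 2 := by
  rw [Algebra.norm_eq_matrix_det (sqrtBasis hs hgen hirr), leftMulMatrix_sqrtBasis,
    Matrix.det_fin_two_of]
  ring

theorem trace_ratCast_add_mul (x y : ℚ) : Algebra.trace ℚ K ((x : K) + y * s) = 2 * x := by
  rw [Algebra.trace_eq_matrix_trace (sqrtBasis hs hgen hirr), leftMulMatrix_sqrtBasis,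
    Matrix.trace_fin_two_of]
  ring

theorem sq_sub_trace_mul_add_norm (z : K) :
    z ^ 2 - Algebra.trace ℚ K z * z + Algebra.norm ℚ z = 0 := by
  obtain ⟨x, y, rfl⟩ := exists_rat_add_mul_eq_of_adjoin_eq_top hs hgen z
  rw [trace_ratCast_add_mul hs hgen hirr, norm_ratCast_add_mul hs hgen hirr]
  push_cast
  linear_combination (y : K) ^ 2 * hs

theorem exists_trace_sq_sub_four_mul_norm_eq (z : K) :
    ∃ y : ℚ, Algebra.trace ℚ K z ^ 2 - 4 * Algebra.norm ℚ z = d * y ^ 2 := by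
  obtain ⟨x, y, rfl⟩ := exists_rat_add_mul_eq_of_adjoin_eq_top hs hgen z
  rw [trace_ratCast_add_mul hs hgen hirr, norm_ratCast_add_mul hs hgen hirr]
  exact ⟨2 * y, by ring⟩

end QuadraticCoordinates

theorem exists_intCast_eq_of_squarefree_mul_sq {m n : ℤ} (hm : Squarefree m) {q : ℚ}
    (h : m * q ^ 2 = n) : ∃ z : ℤ, (z : ℚ) = q := by
  have hnum : m * q.num ^ 2 = n * (q.den : ℤ) ^ 2 := by
    have hden : (q.den : ℚ) ≠ 0 := by exact_mod_cast q.den_ne_zero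
    rw [← Rat.num_div_den q] at h
    field_simp at h
    exact_mod_cast (by linear_combination h : (m : ℚ) * q.num ^ 2 = n * (q.den : ℤ) ^ 2)
  have hcop : IsCoprime (q.den : ℤ) (q.num ^ 2) := q.isCoprime_num_den.symm.pow_right
  have hden_sq : (q.den : ℤ) * q.den ∣ m :=
    sq (q.den : ℤ) ▸ hcop.pow_left.dvd_of_dvd_mul_right ⟨n, by rw [hnum, mul_comm]⟩
  have hden_one : q.den = 1 := by
    simpa using Int.isUnit_iff_natAbs_eq.mp (hm _ hden_sq)
  exact ⟨q.num, Rat.coe_int_num_of_den_eq_one hden_one⟩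

theorem ratCast_ne_of_sq_eq_of_squarefree {K : Type*} [Field K] [CharZero K] {m : ℤ}
    (hm : Squarefree m) (hm1 : m ≠ 1) {s : K} (hs : s ^ 2 = m) (q : ℚ) : (q : K) ≠ s := by
  rintro rfl
  have hq : (q ^ 2 : ℚ) = m := by exact_mod_cast hs
  obtain ⟨r, rfl⟩ := Rat.isSquare_intCast_iff.mp ⟨q, by rw [← hq, sq]⟩
  exact hm1 (Int.isUnit_mul_self (hm r dvd_rfl))

theorem norm_div_natCast {K : Type*} [Field K] [CharZero K] [FiniteDimensional ℚ K] (x : K)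
    (n : ℕ) : Algebra.norm ℚ (x / n) = Algebra.norm ℚ x / n ^ Module.finrank ℚ K := by
  rw [div_eq_mul_inv, map_mul, Algebra.norm_inv, ← map_natCast (algebraMap ℚ K),
    Algebra.norm_algebraMap, div_eq_mul_inv]

open NumberField

section RamifiedPrime

variable {K : Type*} [Field K] [NumberField K] {m : ℤ} {s : K}

theorem prime_dvd_trace_of_dvd_norm (hm : Squarefree m) (hs : s ^ 2 = m)
    (hgen : Algebra.adjoin ℚ {s} = ⊤) (hirr : ∀ q : ℚ, (q : K) ≠ s) {p : ℤ} (hp : Prime p)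
    (hpm : p ∣ m) {x : 𝓞 K} (hpx : p ∣ Algebra.norm ℤ x) :
    p ∣ Algebra.trace ℤ (𝓞 K) x := by
  obtain ⟨y, hy⟩ :=
    exists_trace_sq_sub_four_mul_norm_eq (d := m) (by exact_mod_cast hs) hgen hirr (x : K)
  rw [← Algebra.coe_trace_int, ← Algebra.coe_norm_int] at hy
  set T := Algebra.trace ℤ (𝓞 K) x
  set N := Algebra.norm ℤ x
  obtain ⟨z, rfl⟩ := exists_intCast_eq_of_squarefree_mul_sq hm (n := T ^ 2 - 4 * N)
    (by rw [← hy]; push_cast; ring)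
  have hdisc : T ^ 2 = 4 * N + m * z ^ 2 := by
    have hdiscQ : (T : ℚ) ^ 2 = 4 * N + m * z ^ 2 := by linear_combination hy
    exact_mod_cast hdiscQ
  exact hp.dvd_of_dvd_pow (n := 2) (hdisc ▸ dvd_add (hpx.mul_left 4) (hpm.mul_right _))

theorem dvd_sq_of_dvd_trace_of_dvd_norm {d : ℚ} (hs : s ^ 2 = d)
    (hgen : Algebra.adjoin ℚ {s} = ⊤) (hirr : ∀ q : ℚ, (q : K) ≠ s) {p : ℤ} {x : 𝓞 K}
    (hpT : p ∣ Algebra.trace ℤ (𝓞 K) x) (hpN : p ∣ Algebra.norm ℤ x) :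
    (p : 𝓞 K) ∣ x ^ 2 := by
  obtain ⟨t, ht⟩ := hpT
  obtain ⟨n, hn⟩ := hpN
  refine ⟨t * x - n, RingOfIntegers.ext ?_⟩
  have hx := sq_sub_trace_mul_add_norm hs hgen hirr (x : K)
  rw [← Algebra.coe_trace_int, ← Algebra.coe_norm_int, ht, hn] at hx
  push_cast [map_intCast] at hx ⊢
  linear_combination hx

theorem exists_coe_eq_mul_div_of_dvd_sq {p m₀ : ℤ} (hs : s ^ 2 = p * m₀) {x : 𝓞 K}
    (hpx : (p : 𝓞 K) ∣ x ^ 2) : ∃ w : 𝓞 K, (w : K) = s * x / p := by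
  obtain ⟨u, hu⟩ := hpx
  obtain rfl | hp := eq_or_ne p 0
  · exact ⟨0, by simp⟩
  have hpK : (p : K) ≠ 0 := by exact_mod_cast hp
  have hsq : (s * x / p) ^ 2 = ((m₀ * u : 𝓞 K) : K) := by
    have hu' : (x : K) ^ 2 = p * u := by simpa using congrArg (algebraMap (𝓞 K) K) hu
    push_cast [map_intCast]
    field_simp
    linear_combination (x ^ 2 : K) * hs + (p * m₀ : K) * hu'
  exact ⟨⟨_, .of_pow two_pos (hsq ▸ (m₀ * u).isIntegral_coe)⟩, rfl⟩

theorem exists_mul_sub_eq_div_of_isCoprime {p m₀ b : ℤ} (hs : s ^ 2 = p * m₀)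
    (hcop : IsCoprime p (b * m₀)) {x w : 𝓞 K} (hw : (w : K) = s * x / p) (a₀ : ℤ) :
    ∃ γ δ : 𝓞 K, (p * a₀ + b * s) / p * γ - δ = x / p := by
  obtain rfl | hp := eq_or_ne p 0
  · exact ⟨0, 0, by simp⟩
  have hpK : (p : K) ≠ 0 := by exact_mod_cast hp
  obtain ⟨u, v, huv⟩ := hcop
  have huvK : (u * p + v * (b * m₀) : K) = 1 := by exact_mod_cast huv
  refine ⟨v * w, a₀ * v * w - u * x, ?_⟩
  simp only [map_sub, map_mul, map_intCast, hw]
  field_simp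
  linear_combination (b * v * x : K) * hs + (p * x : K) * huvK

end RamifiedPrime

theorem dh_ramified_case_general (m : ℤ) (hm : Squarefree m)
    (K : Type*) [Field K] [NumberField K] (sqm : K) (hsq : sqm ^ 2 = (m : K))
    (hgen : Algebra.adjoin ℚ {sqm} = ⊤)
    (p : ℕ) (hp : p.Prime) (hpm : (p : ℤ) ∣ m)
    (π : NumberField.RingOfIntegers K)
    (hπ : |Algebra.norm ℚ (π : K)| = (p : ℚ))
    (a b : ℤ) (ha : (p : ℤ) ∣ a) (hb : ¬ (p : ℤ) ∣ b)
    (ξ : K) (hξ : ξ = ((a : K) + (b : K) * sqm) / (p : K)) :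
    ∃ γ δ : NumberField.RingOfIntegers K,
      |Algebra.norm ℚ (ξ * (γ : K) - (δ : K))| = 1 / (p : ℚ) ∧
      0 < |Algebra.norm ℚ (ξ * (γ : K) - (δ : K))| ∧
      |Algebra.norm ℚ (ξ * (γ : K) - (δ : K))| < 1 := by
  have hpZ : Prime (p : ℤ) := Nat.prime_iff_prime_int.mp hp
  have hirr := ratCast_ne_of_sq_eq_of_squarefree hm
    (fun h ↦ hpZ.not_isUnit (isUnit_of_dvd_one (h ▸ hpm))) hsq
  have hsq' : sqm ^ 2 = ((m : ℚ) : K) := by exact_mod_cast hsq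
  have hpN : (p : ℤ) ∣ Algebra.norm ℤ π := by
    have habs : |Algebra.norm ℤ π| = p := by exact_mod_cast Algebra.coe_norm_int π ▸ hπ
    rw [← dvd_abs, habs]
  have hpπ := dvd_sq_of_dvd_trace_of_dvd_norm hsq' hgen hirr
    (prime_dvd_trace_of_dvd_norm hm hsq hgen hirr hpZ hpm hpN) hpN
  obtain ⟨m₀, rfl⟩ := hpm
  have hcop : IsCoprime (p : ℤ) (b * m₀) := hpZ.coprime_iff_not_dvd.mpr fun h ↦
    (hpZ.dvd_or_dvd h).elim hb fun h ↦ hpZ.not_isUnit (hm _ (mul_dvd_mul_left _ h))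
  have hsq₀ : sqm ^ 2 = ((p : ℤ) : K) * m₀ := by exact_mod_cast hsq
  obtain ⟨w, hw⟩ := exists_coe_eq_mul_div_of_dvd_sq hsq₀ hpπ
  obtain ⟨a₀, rfl⟩ := ha
  obtain ⟨γ, δ, hγδ⟩ := exists_mul_sub_eq_div_of_isCoprime hsq₀ hcop hw a₀
  have hp1 : (1 : ℚ) < p := by exact_mod_cast hp.one_lt
  have hp0 : (0 : ℚ) < p := zero_lt_one.trans hp1
  have hnorm : |Algebra.norm ℚ (ξ * (γ : K) - (δ : K))| = 1 / (p : ℚ) := by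
    rw [hξ]
    push_cast at hγδ ⊢
    rw [hγδ, norm_div_natCast, finrank_eq_two hsq' hgen hirr, abs_div, hπ,
      abs_of_pos (pow_pos hp0 2)]
    field_simp
  exact ⟨γ, δ, hnorm, hnorm ▸ one_div_pos.mpr hp0, hnorm ▸ (div_lt_one hp0).mpr hp1⟩

/-- Ramified odd prime case: with ξ = (a + b√m)/p, p ∣ a, p ∤ b, and π of norm ±p,
one finds γ, δ in the ring of integers with |N(ξγ − δ)| = 1/p. -/
theorem dh_ramified_case (m : ℤ) (hm : Squarefree m) (hmpos : 0 < m)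
    (K : Type*) [Field K] [NumberField K] (sqm : K) (hsq : sqm ^ 2 = (m : K))
    (hgen : Algebra.adjoin ℚ {sqm} = ⊤)
    (p : ℕ) (hp : p.Prime) (hodd : Odd p) (hpm : (p : ℤ) ∣ m)
    (π : NumberField.RingOfIntegers K)
    (hπ : |Algebra.norm ℚ (π : K)| = (p : ℚ))
    (a b : ℤ) (ha : (p : ℤ) ∣ a) (hb : ¬ (p : ℤ) ∣ b)
    (ξ : K) (hξ : ξ = ((a : K) + (b : K) * sqm) / (p : K)) :
    ∃ γ δ : NumberField.RingOfIntegers K,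
      |Algebra.norm ℚ (ξ * (γ : K) - (δ : K))| = 1 / (p : ℚ) ∧
      0 < |Algebra.norm ℚ (ξ * (γ : K) - (δ : K))| ∧
      |Algebra.norm ℚ (ξ * (γ : K) - (δ : K))| < 1 :=
  dh_ramified_case_general m hm K sqm hsq hgen p hp hpm π hπ a b ha hb ξ hξ
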